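/- In the absence of the external force (f = 0), the P-DRLM1 scheme satisfies the exact discrete energy law [K(uⁿ⁺¹,pⁿ⁺¹) − K(uⁿ,pⁿ)]/τ + θ[(Qⁿ⁺¹)² − (Qⁿ)²]/τ = −ν‖∇ûⁿ⁺¹‖² ≤ 0; consequently it is unconditionally energy stable: K(uⁿ⁺¹,pⁿ⁺¹) + θ[(Qⁿ⁺¹)² − 1] ≤ K(uⁿ,pⁿ) + θ[(Qⁿ)² − 1] for every n = 0, 1, …, N and every time step τ > 0. -/

import Mathlib

open MeasureTheory Real
open scoped RealInnerProductSpace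

noncomputable section

/-- Euclidean space `ℝ^d`. -/
abbrev Euc (d : ℕ) := EuclideanSpace ℝ (Fin d)

/-- Partial derivative of a scalar field in the `j`-th coordinate direction. -/
def pder {d : ℕ} (j : Fin d) (f : Euc d → ℝ) (x : Euc d) : ℝ :=
  fderiv ℝ f x (EuclideanSpace.single j 1)

/-- Gradient of a scalar field. -/
def grd {d : ℕ} (f : Euc d → ℝ) (x : Euc d) : Euc d :=
  (WithLp.equiv 2 (Fin d → ℝ)).symm fun j => pder j f x

/-- Laplacian of a scalar field. -/
def lap {d : ℕ} (f : Euc d → ℝ) (x : Euc d) : ℝ :=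
  ∑ j, pder j (fun y => pder j f y) x

/-- Componentwise Laplacian of a vector field. -/
def vlap {d : ℕ} (u : Euc d → Euc d) (x : Euc d) : Euc d :=
  (WithLp.equiv 2 (Fin d → ℝ)).symm fun i => lap (fun y => u y i) x

/-- Divergence of a vector field. -/
def divg {d : ℕ} (u : Euc d → Euc d) (x : Euc d) : ℝ :=
  ∑ j, pder j (fun y => u y j) x

/-- Convection term `(u·∇)v`. -/
def conv {d : ℕ} (u v : Euc d → Euc d) (x : Euc d) : Euc d :=
  (WithLp.equiv 2 (Fin d → ℝ)).symm fun i => ∑ j, u x j * pder j (fun y => v y i) x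

/-- `L²(Ω)` inner product of vector fields. -/
def ipL2 {d : ℕ} (Ω : Set (Euc d)) (u v : Euc d → Euc d) : ℝ :=
  ∫ x in Ω, ⟪u x, v x⟫

/-- Squared `L²(Ω)` norm of a vector field. -/
def nsq {d : ℕ} (Ω : Set (Euc d)) (u : Euc d → Euc d) : ℝ :=
  ∫ x in Ω, ‖u x‖ ^ 2

/-- Squared `L²(Ω)` norm of the gradient of a scalar field. -/
def gnsq {d : ℕ} (Ω : Set (Euc d)) (p : Euc d → ℝ) : ℝ :=
  ∫ x in Ω, ‖grd p x‖ ^ 2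

/-- Squared `L²(Ω)` norm of the gradient of a vector field. -/
def vgnsq {d : ℕ} (Ω : Set (Euc d)) (u : Euc d → Euc d) : ℝ :=
  ∫ x in Ω, ∑ i, ‖grd (fun y => u y i) x‖ ^ 2

/-- `(∇p, v)` in `L²(Ω)`. -/
def ipGrad {d : ℕ} (Ω : Set (Euc d)) (p : Euc d → ℝ) (v : Euc d → Euc d) : ℝ :=
  ∫ x in Ω, ⟪grd p x, v x⟫

/-- `(∇p, ∇q)` in `L²(Ω)`. -/
def ipGG {d : ℕ} (Ω : Set (Euc d)) (p q : Euc d → ℝ) : ℝ :=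
  ∫ x in Ω, ⟪grd p x, grd q x⟫

/-- `(∇u, ∇v)` in `L²(Ω)` for vector fields. -/
def ipVG {d : ℕ} (Ω : Set (Euc d)) (u v : Euc d → Euc d) : ℝ :=
  ∫ x in Ω, ∑ i, ⟪grd (fun y => u y i) x, grd (fun y => v y i) x⟫

/-- Trilinear form `b(u,v,w) = ∫_Ω ((u·∇)v)·w`. -/
def triB {d : ℕ} (Ω : Set (Euc d)) (u v w : Euc d → Euc d) : ℝ :=
  ∫ x in Ω, ⟪conv u v x, w x⟫

/-- Discrete energy `K(u,p) = ½(‖u‖² + τ²‖∇p‖²)`. -/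
def Ke {d : ℕ} (Ω : Set (Euc d)) (τ : ℝ) (u : Euc d → Euc d) (p : Euc d → ℝ) : ℝ :=
  (1/2) * (nsq Ω u + τ^2 * gnsq Ω p)

/-- Squared `H¹(Ω)` norm of a vector field. -/
def h1sq {d : ℕ} (Ω : Set (Euc d)) (u : Euc d → Euc d) : ℝ :=
  nsq Ω u + vgnsq Ω u

/-- Squared `H²(Ω)` norm of a vector field. -/
def h2sq {d : ℕ} (Ω : Set (Euc d)) (u : Euc d → Euc d) : ℝ :=
  h1sq Ω u + ∫ x in Ω, ∑ i, ∑ j, ∑ k,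
    (pder k (fun y => pder j (fun z => u z i) y) x) ^ 2

/-- `H⁻¹(Ω)` norm, defined by duality against `H¹₀(Ω)` vector fields. -/
def negNorm {d : ℕ} (Ω : Set (Euc d)) (f : Euc d → Euc d) : ℝ :=
  sSup {r : ℝ | ∃ v : Euc d → Euc d, (∀ x ∈ frontier Ω, v x = 0) ∧
    r = (∫ x in Ω, ⟪f x, v x⟫) / Real.sqrt (vgnsq Ω v)}

/-- One step of the first-order pressure-correction DRLM scheme (P-DRLM1):
from `(uⁿ, pⁿ, Qⁿ)` the quadruple `(ûⁿ⁺¹, uⁿ⁺¹, pⁿ⁺¹, Qⁿ⁺¹)` satisfies the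
prediction step (with force `f` and no-slip boundary condition on `ûⁿ⁺¹`),
the projection step, incompressibility (with vanishing normal trace, `nrm`
being the outward normal of `Ω`), and the dynamically regularized Lagrange
multiplier energy equation. -/
def PDRLM1 {d : ℕ} (Ω : Set (Euc d)) (ν τ θ : ℝ) (f : Euc d → Euc d)
    (u : Euc d → Euc d) (p : Euc d → ℝ) (Q : ℝ)
    (uh u' : Euc d → Euc d) (p' : Euc d → ℝ) (Q' : ℝ)
    (nrm : Euc d → Euc d) : Prop :=
  (∀ x ∈ Ω, (1/τ) • (uh x - u x) + Q' • conv u u x + grd p x - ν • vlap uh x = f x) ∧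
  (∀ x ∈ frontier Ω, uh x = 0) ∧
  (∀ x ∈ Ω, (1/τ) • (u' x - uh x) + grd (fun y => p' y - p y) x = 0) ∧
  (∀ x ∈ Ω, divg u' x = 0) ∧
  (∀ x ∈ frontier Ω, ⟪u' x, nrm x⟫ = 0) ∧
  ((Ke Ω τ u' p' - Ke Ω τ u p) / τ + θ * (Q' ^ 2 - Q ^ 2) / τ
    = ipL2 Ω (fun x => (1/τ) • (uh x - u x)) uh + Q' * triB Ω u u uh + ipGrad Ω p uh)


open Bornology

lemma oneD_integral_deriv_eq_zero {g g' : ℝ → ℝ} (hg : ∀ t, HasDerivAt g (g' t) t)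
    (hg' : Continuous g') {S : Set ℝ} (hSo : IsOpen S) (hSb : IsBounded S)
    (h0 : ∀ t ∈ frontier S, g t = 0) : ∫ t in S, g' t = 0 := by
  set 𝒞 : Set (Set ℝ) := {C | ∃ x ∈ S, C = connectedComponentIn S x} with h𝒞
  have hCsub : ∀ C ∈ 𝒞, C ⊆ S := by
    rintro C ⟨x, hx, rfl⟩; exact connectedComponentIn_subset S x
  have hCopen : ∀ C ∈ 𝒞, IsOpen C := by
    rintro C ⟨x, hx, rfl⟩; exact hSo.connectedComponentIn
  have hCne : ∀ C ∈ 𝒞, C.Nonempty := by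
    rintro C ⟨x, hx, rfl⟩; exact ⟨x, mem_connectedComponentIn hx⟩
  have hcount : 𝒞.Countable := by
    have : 𝒞 ⊆ (fun q : ℚ => connectedComponentIn S (q : ℝ)) '' Set.univ := by
      rintro C ⟨x, hx, rfl⟩
      obtain ⟨q, hq⟩ := Rat.denseRange_cast.exists_mem_open hSo.connectedComponentIn
        ⟨x, mem_connectedComponentIn hx⟩
      exact ⟨q, trivial, (connectedComponentIn_eq hq).symm⟩
    exact (Set.countable_univ.image _).mono this
  haveI := hcount.to_subtype
  have hSU : S = ⋃ C : 𝒞, (C : Set ℝ) := by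
    apply Set.Subset.antisymm
    · intro x hx
      exact Set.mem_iUnion.2 ⟨⟨connectedComponentIn S x, ⟨x, hx, rfl⟩⟩,
        mem_connectedComponentIn hx⟩
    · exact Set.iUnion_subset fun C => hCsub C C.2
  have hdisj : Pairwise (Function.onFun Disjoint fun C : 𝒞 => (C : Set ℝ)) := by
    intro C D hCD
    simp only [Function.onFun]
    rw [Set.disjoint_left]
    intro x hxC hxD
    apply hCD
    obtain ⟨c, hc, hCc⟩ := C.2
    obtain ⟨e, he, hDe⟩ := D.2
    have h1 : (C : Set ℝ) = connectedComponentIn S x := by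
      rw [hCc]; exact connectedComponentIn_eq (hCc ▸ hxC)
    have h2 : (D : Set ℝ) = connectedComponentIn S x := by
      rw [hDe]; exact connectedComponentIn_eq (hDe ▸ hxD)
    exact Subtype.ext (h1.trans h2.symm)
  obtain ⟨R, hR⟩ := hSb.subset_closedBall 0
  have hint : IntegrableOn g' S := by
    exact ((hg'.continuousOn).integrableOn_compact (isCompact_closedBall 0 R)).mono_set hR
  have hzero : ∀ C ∈ 𝒞, ∫ t in C, g' t = 0 := by
    intro C hC
    have hCo := hCopen C hC
    have hCb : IsBounded C := hSb.subset (hCsub C hC)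
    obtain ⟨x₀, hx₀⟩ := hCne C hC
    have hpc : IsPreconnected C := by
      obtain ⟨x, hx, rfl⟩ := hC; exact isPreconnected_connectedComponentIn
    have hord := hpc.ordConnected
    set a := sInf C with ha
    set b := sSup C with hb
    have hbdd_b := hCb.bddAbove
    have hbdd_a := hCb.bddBelow
    have haC : a ∉ C := by
      intro haC
      obtain ⟨ε, hε, hball⟩ := Metric.isOpen_iff.1 hCo a haC
      have hmem : a - ε / 2 ∈ C := by
        apply hball
        rw [Metric.mem_ball, Real.dist_eq]
        have h : a - ε / 2 - a = -(ε/2) := by ring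
        rw [h, abs_neg, abs_of_pos (by linarith)]; linarith
      have := csInf_le hbdd_a hmem
      linarith
    have hbC : b ∉ C := by
      intro hbC
      obtain ⟨ε, hε, hball⟩ := Metric.isOpen_iff.1 hCo b hbC
      have hmem : b + ε / 2 ∈ C := by
        apply hball
        rw [Metric.mem_ball, Real.dist_eq]
        have h : b + ε / 2 - b = ε/2 := by ring
        rw [h, abs_of_pos (by linarith)]; linarith
      have := le_csSup hbdd_b hmem
      linarith
    have hCIoo : C = Set.Ioo a b := by
      apply Set.Subset.antisymm
      · intro x hx
        have h1 := csInf_le hbdd_a hx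
        have h2 := le_csSup hbdd_b hx
        exact ⟨lt_of_le_of_ne h1 (fun h => haC (h ▸ hx)),
          lt_of_le_of_ne h2 (fun h => hbC (h.symm ▸ hx))⟩
      · rintro x ⟨h1, h2⟩
        obtain ⟨y, hy, hyx⟩ := exists_lt_of_csInf_lt ⟨x₀, hx₀⟩ h1
        obtain ⟨z, hz, hxz⟩ := exists_lt_of_lt_csSup ⟨x₀, hx₀⟩ h2
        exact hord.out hy hz ⟨hyx.le, hxz.le⟩
    have hab : a < b := by
      rw [hCIoo] at hx₀; exact lt_trans hx₀.1 hx₀.2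
    have hfr : ∀ c, (c = a ∨ c = b) → c ∈ frontier S := by
      intro c hc
      have hccl : c ∈ closure C := by
        rw [hCIoo, closure_Ioo hab.ne]
        rcases hc with rfl | rfl
        · exact Set.mem_Icc.2 ⟨le_rfl, hab.le⟩
        · exact Set.mem_Icc.2 ⟨hab.le, le_rfl⟩
      have hclS : c ∈ closure S := closure_mono (hCsub C hC) hccl
      have hcS : c ∉ S := by
        intro hcS
        have hopen : IsOpen (connectedComponentIn S c) := hSo.connectedComponentIn
        obtain ⟨ε, hε, hball⟩ := Metric.isOpen_iff.1 hopen c (mem_connectedComponentIn hcS)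
        have hmin : (0:ℝ) < min (ε/2) ((b-a)/2) := lt_min (by linarith) (by linarith)
        have hminε : min (ε/2) ((b-a)/2) ≤ ε/2 := min_le_left _ _
        have hminba : min (ε/2) ((b-a)/2) ≤ (b-a)/2 := min_le_right _ _
        have hcom : ∃ u, u ∈ connectedComponentIn S c ∧ u ∈ C := by
          rcases hc with rfl | rfl
          · refine ⟨a + min (ε/2) ((b-a)/2), hball ?_, ?_⟩
            · rw [Metric.mem_ball, Real.dist_eq]
              have h : a + min (ε/2) ((b-a)/2) - a = min (ε/2) ((b-a)/2) := by ring
              rw [h, abs_of_pos hmin]; linarith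
            · rw [hCIoo]; exact ⟨by linarith, by linarith⟩
          · refine ⟨b - min (ε/2) ((b-a)/2), hball ?_, ?_⟩
            · rw [Metric.mem_ball, Real.dist_eq]
              have h : b - min (ε/2) ((b-a)/2) - b = -(min (ε/2) ((b-a)/2)) := by ring
              rw [h, abs_neg, abs_of_pos hmin]; linarith
            · rw [hCIoo]; exact ⟨by linarith, by linarith⟩
        obtain ⟨u, hu1, hu2⟩ := hcom
        obtain ⟨x, hx, hCx⟩ := hC
        have e1 : connectedComponentIn S c = connectedComponentIn S u :=
          connectedComponentIn_eq hu1
        have e2 : C = connectedComponentIn S u := by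
          rw [hCx]; exact connectedComponentIn_eq (hCx ▸ hu2)
        have hcC : c ∈ C := by
          rw [e2, ← e1]; exact mem_connectedComponentIn hcS
        rcases hc with rfl | rfl
        · exact haC hcC
        · exact hbC hcC
      rw [hSo.frontier_eq]; exact ⟨hclS, hcS⟩
    have hga : g a = 0 := h0 a (hfr a (Or.inl rfl))
    have hgb : g b = 0 := h0 b (hfr b (Or.inr rfl))
    rw [hCIoo, ← integral_Ioc_eq_integral_Ioo, ← intervalIntegral.integral_of_le hab.le,
      intervalIntegral.integral_eq_sub_of_hasDerivAt (fun x _ => hg x)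
        (hg'.intervalIntegrable a b), hga, hgb, sub_zero]
  calc ∫ t in S, g' t = ∑' C : 𝒞, ∫ t in (C : Set ℝ), g' t := by
        rw [hSU] at hint ⊢
        exact integral_iUnion (fun C => (hCopen C C.2).measurableSet) hdisj hint
    _ = ∑' _ : 𝒞, (0:ℝ) := tsum_congr (fun C => hzero C C.2)
    _ = 0 := tsum_zero

lemma contDiff_pder {d : ℕ} {f : Euc d → ℝ} (hf : ContDiff ℝ (⊤ : ℕ∞) f) (j : Fin d) :
    ContDiff ℝ (⊤ : ℕ∞) (pder j f) := by
  exact (ContinuousLinearMap.apply ℝ ℝ (EuclideanSpace.single j 1)).contDiff.comp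
    (hf.fderiv_right (m := ((⊤ : ℕ∞) : WithTop ℕ∞)) (by exact_mod_cast le_top))

lemma abs_coord_le_norm {d : ℕ} (x : Euc d) (j : Fin d) : |x j| ≤ ‖x‖ := by
  have h1 : ⟪x, EuclideanSpace.single j 1⟫ = x j := by
    simp [PiLp.inner_apply, EuclideanSpace.single_apply]
  calc |x j| = |⟪x, EuclideanSpace.single j 1⟫| := by rw [h1]
    _ ≤ ‖x‖ * ‖EuclideanSpace.single j (1:ℝ)‖ := abs_real_inner_le_norm _ _
    _ = ‖x‖ := by rw [EuclideanSpace.norm_single]; simp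

lemma integral_pder_eq_zero_aux {m : ℕ} {Ω : Set (Euc (m+1))} (hΩo : IsOpen Ω)
    (hΩb : IsBounded Ω) {f : Euc (m+1) → ℝ} (hf : ContDiff ℝ (⊤ : ℕ∞) f)
    (hf0 : ∀ x ∈ frontier Ω, f x = 0) (j : Fin (m+1)) :
    ∫ x in Ω, pder j f x = 0 := by
  classical
  set c : (Fin (m+1) → ℝ) → Euc (m+1) :=
    ((PiLp.continuousLinearEquiv 2 ℝ (fun _ : Fin (m+1) => ℝ)).symm : _ → _) with hc
  set ψ : ℝ → (Fin m → ℝ) → Euc (m+1) := fun t y => c (j.insertNth t y) with hψ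
  set v : Euc (m+1) := EuclideanSpace.single j 1 with hv
  -- affine structure of ψ
  have hins : ∀ (t : ℝ) (y : Fin m → ℝ), j.insertNth t y
      = j.insertNth (0:ℝ) y + t • (Pi.single j 1 : Fin (m+1) → ℝ) := by
    intro t y
    funext k
    rcases eq_or_ne k j with h | hk
    · subst h; simp
    · obtain ⟨l, rfl⟩ := Fin.exists_succAbove_eq hk
      simp [Fin.succAbove_ne j l, Pi.single_eq_of_ne (Fin.succAbove_ne j l)]
  have hψaff : ∀ (t : ℝ) (y : Fin m → ℝ), ψ t y = ψ 0 y + t • v := by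
    intro t y
    have : ψ t y = (PiLp.continuousLinearEquiv 2 ℝ (fun _ : Fin (m+1) => ℝ)).symm
        (j.insertNth t y) := rfl
    rw [this, hins t y, map_add, _root_.map_smul]
    rfl
  have hψcont : ∀ y, Continuous (fun t => ψ t y) := by
    intro y
    have : (fun t => ψ t y) = fun t => ψ 0 y + t • v := funext (fun t => hψaff t y)
    rw [this]
    exact continuous_const.add (continuous_id.smul continuous_const)
  have hψj : ∀ t y, (ψ t y) j = t := by
    intro t y; simp [hψ, hc]
  have hψk : ∀ t y k, (ψ t y) (j.succAbove k) = y k := by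
    intro t y k; simp [hψ, hc]
  -- derivative along slices
  have hderiv : ∀ (y : Fin m → ℝ) (t : ℝ),
      HasDerivAt (fun s => f (ψ s y)) (pder j f (ψ t y)) t := by
    intro y t
    have hline : HasDerivAt (fun s => ψ s y) v t := by
      have : (fun s => ψ s y) = fun s => ψ 0 y + s • v := funext (fun s => hψaff s y)
      rw [this]
      simpa using ((hasDerivAt_id t).smul_const v).const_add (ψ 0 y)
    have hfd := (hf.differentiable (by simp) (ψ t y)).hasFDerivAt
    exact hfd.comp_hasDerivAt t hline
  -- measure-preserving setup
  set e1 := (MeasurableEquiv.toLp 2 (Fin (m+1) → ℝ)).symm with he1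
  set e2 := MeasurableEquiv.piFinSuccAbove (fun _ : Fin (m+1) => ℝ) j with he2
  set Φ : Euc (m+1) ≃ᵐ ℝ × (Fin m → ℝ) := e1.trans e2 with hΦ
  have hΦmp : MeasurePreserving Φ volume volume :=
    (volume_preserving_piFinSuccAbove (fun _ : Fin (m+1) => ℝ) j).comp
      (EuclideanSpace.volume_preserving_symm_measurableEquiv_toLp (Fin (m+1)))
  have hΦsymm : ∀ (t : ℝ) (y : Fin m → ℝ), Φ.symm (t, y) = ψ t y := fun t y => rfl
  set S : Set (ℝ × (Fin m → ℝ)) := Φ.symm ⁻¹' Ω with hS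
  have hSmeas : MeasurableSet S := Φ.symm.measurable hΩo.measurableSet
  set h : ℝ × (Fin m → ℝ) → ℝ := fun z => pder j f (Φ.symm z) with hh
  -- bound the set S
  obtain ⟨R₀, hR₀⟩ := hΩb.subset_closedBall 0
  set R : ℝ := max R₀ 0 with hRdef
  have hR : Ω ⊆ Metric.closedBall 0 R :=
    hR₀.trans (Metric.closedBall_subset_closedBall (le_max_left _ _))
  have hRnn : (0:ℝ) ≤ R := le_max_right _ _
  have hSsub : S ⊆ Metric.closedBall (0:ℝ) R ×ˢ Metric.closedBall (0 : Fin m → ℝ) R := by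
    rintro ⟨t, y⟩ hz
    have hmem : ψ t y ∈ Ω := hz
    have hnorm : ‖ψ t y‖ ≤ R := by
      have := hR hmem; simpa [Metric.mem_closedBall, dist_zero_right] using this
    constructor
    · simp only [Metric.mem_closedBall, dist_zero_right, Real.norm_eq_abs]
      calc |t| = |(ψ t y) j| := by rw [hψj]
        _ ≤ ‖ψ t y‖ := abs_coord_le_norm _ _
        _ ≤ R := hnorm
    · simp only [Metric.mem_closedBall, dist_zero_right]
      rw [pi_norm_le_iff_of_nonneg hRnn]
      intro k
      calc ‖y k‖ = |(ψ t y) (j.succAbove k)| := by rw [hψk]; rfl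
        _ ≤ ‖ψ t y‖ := abs_coord_le_norm _ _
        _ ≤ R := hnorm
  -- integrability of the indicator
  have hScompact : IsCompact (closure Ω) := hΩb.isCompact_closure
  have hpcont : Continuous (pder j f) := (contDiff_pder hf j).continuous
  obtain ⟨M, hM⟩ := hScompact.exists_bound_of_continuousOn hpcont.continuousOn
  have hSvol : volume S ≠ ⊤ := by
    have hlt : volume (Metric.closedBall (0:ℝ) R ×ˢ Metric.closedBall (0 : Fin m → ℝ) R) < ⊤ := by
      rw [MeasureTheory.Measure.volume_eq_prod, Measure.prod_prod]
      exact ENNReal.mul_lt_top measure_closedBall_lt_top measure_closedBall_lt_top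
    exact ne_of_lt (lt_of_le_of_lt (measure_mono hSsub) hlt)
  have hinteg : Integrable (S.indicator h) volume := by
    rw [integrable_indicator_iff hSmeas]
    apply Measure.integrableOn_of_bounded hSvol
      ((hpcont.measurable.comp Φ.symm.measurable).aestronglyMeasurable) (M := M)
    filter_upwards [ae_restrict_mem hSmeas] with z hz
    exact hM (Φ.symm z) (subset_closure hz)
  -- slices
  have hslice : ∀ y : Fin m → ℝ, (∫ t, S.indicator h (t, y)) = 0 := by
    intro y
    set Sy : Set ℝ := (fun t => ψ t y) ⁻¹' Ω with hSy
    have hSyo : IsOpen Sy := hΩo.preimage (hψcont y)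
    have hind : (fun t => S.indicator h (t, y))
        = Sy.indicator (fun t => pder j f (ψ t y)) := rfl
    have hSyb : IsBounded Sy := by
      apply (Metric.isBounded_closedBall (x := (0:ℝ)) (r := R)).subset
      intro t ht
      have hnorm : ‖ψ t y‖ ≤ R := by
        have := hR ht; simpa [Metric.mem_closedBall, dist_zero_right] using this
      simp only [Metric.mem_closedBall, dist_zero_right, Real.norm_eq_abs]
      calc |t| = |(ψ t y) j| := by rw [hψj]
        _ ≤ ‖ψ t y‖ := abs_coord_le_norm _ _
        _ ≤ R := hnorm
    have hfr : ∀ t ∈ frontier Sy, f (ψ t y) = 0 := by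
      intro t ht
      rw [hSyo.frontier_eq] at ht
      apply hf0
      rw [hΩo.frontier_eq]
      exact ⟨(hψcont y).closure_preimage_subset Ω ht.1, ht.2⟩
    rw [hind, integral_indicator hSyo.measurableSet]
    exact oneD_integral_deriv_eq_zero (hderiv y) (hpcont.comp (hψcont y)) hSyo hSyb hfr
  -- put everything together via Fubini
  calc ∫ x in Ω, pder j f x
      = ∫ z in S, h z := by
        rw [hS]
        exact ((hΦmp.symm Φ).setIntegral_preimage_emb Φ.symm.measurableEmbedding
          (pder j f) Ω).symm
    _ = ∫ z, S.indicator h z := (integral_indicator hSmeas).symm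
    _ = ∫ y, ∫ t, S.indicator h (t, y) := by
        rw [MeasureTheory.Measure.volume_eq_prod] at hinteg ⊢
        exact integral_prod_symm _ hinteg
    _ = 0 := by simp [hslice]


lemma integral_pder_eq_zero {d : ℕ} {Ω : Set (Euc d)} (hΩo : IsOpen Ω) (hΩb : IsBounded Ω)
    {f : Euc d → ℝ} (hf : ContDiff ℝ (⊤ : ℕ∞) f) (hf0 : ∀ x ∈ frontier Ω, f x = 0) (j : Fin d) :
    ∫ x in Ω, pder j f x = 0 := by
  cases d with
  | zero => exact j.elim0
  | succ m => exact integral_pder_eq_zero_aux hΩo hΩb hf hf0 j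

lemma integrableOn_of_continuous {d : ℕ} {Ω : Set (Euc d)} (hΩb : IsBounded Ω)
    {φ : Euc d → ℝ} (hφ : Continuous φ) : IntegrableOn φ Ω volume := by
  obtain ⟨R, hR⟩ := hΩb.subset_closedBall 0
  exact (hφ.continuousOn.integrableOn_compact (isCompact_closedBall 0 R)).mono_set hR

lemma continuous_coord {d : ℕ} {u : Euc d → Euc d} (hu : Continuous u) (i : Fin d) :
    Continuous fun y => u y i :=
  (EuclideanSpace.proj (𝕜 := ℝ) i).continuous.comp hu

lemma contDiff_coord {d : ℕ} {u : Euc d → Euc d} (hu : ContDiff ℝ (⊤ : ℕ∞) u) (i : Fin d) :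
    ContDiff ℝ (⊤ : ℕ∞) (fun y => u y i) :=
  (EuclideanSpace.proj (𝕜 := ℝ) i).contDiff.comp hu

lemma continuous_toEuc {d : ℕ} {F : Euc d → Fin d → ℝ} (hF : Continuous F) :
    Continuous fun x => (WithLp.equiv 2 (Fin d → ℝ)).symm (F x) :=
  (PiLp.continuousLinearEquiv 2 ℝ (fun _ : Fin d => ℝ)).symm.continuous.comp hF

lemma pder_finset_sum {d : ℕ} {ι : Type*} (j : Fin d) (s : Finset ι) (F : ι → Euc d → ℝ)
    (x : Euc d) (hF : ∀ i ∈ s, DifferentiableAt ℝ (F i) x) :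
    pder j (fun y => ∑ i ∈ s, F i y) x = ∑ i ∈ s, pder j (F i) x := by
  unfold pder; rw [fderiv_fun_sum hF]; simp

lemma pder_mul {d : ℕ} (j : Fin d) {F G : Euc d → ℝ} {x : Euc d}
    (hF : DifferentiableAt ℝ F x) (hG : DifferentiableAt ℝ G x) :
    pder j (fun y => F y * G y) x = F x * pder j G x + G x * pder j F x := by
  unfold pder; rw [fderiv_fun_mul hF hG]; simp

set_option maxHeartbeats 2000000 in
/-- with `f = 0` the P-DRLM1 scheme satisfies the exact discrete
energy law and is unconditionally energy stable, for every time step `τ > 0`. -/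
theorem pdrlm1_unconditional_energy_stability
    {d : ℕ} (hd : d = 2 ∨ d = 3)
    (Ω : Set (Euc d)) (hΩo : IsOpen Ω) (hΩb : Bornology.IsBounded Ω) (hΩne : Ω.Nonempty)
    (ν : ℝ) (hν : ν ∈ Set.Ioo (0:ℝ) 1)
    (T : ℝ) (hT : 0 < T) (N : ℕ) (hN : 0 < N) (τ : ℝ) (hτ : τ = T / N) (hτpos : 0 < τ)
    (θ : ℝ) (hθ : 0 < θ)
    (U Uh : ℕ → Euc d → Euc d) (P : ℕ → Euc d → ℝ) (Q : ℕ → ℝ) (hQ0 : Q 0 = 1)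
    (nrm : Euc d → Euc d)
    -- smoothness of the discrete fields
    (hsU : ∀ n, ContDiff ℝ (⊤ : ℕ∞) (U n)) (hsUh : ∀ n, ContDiff ℝ (⊤ : ℕ∞) (Uh n))
    (hsP : ∀ n, ContDiff ℝ (⊤ : ℕ∞) (P n))
    -- the P-DRLM1 scheme in the absence of the external force
    (hscheme : ∀ n < N, PDRLM1 Ω ν τ θ (fun _ => (0 : Euc d))
      (U n) (P n) (Q n) (Uh (n+1)) (U (n+1)) (P (n+1)) (Q (n+1)) nrm) :
    ∀ n < N,
      ((Ke Ω τ (U (n+1)) (P (n+1)) - Ke Ω τ (U n) (P n)) / τ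
          + θ * ((Q (n+1)) ^ 2 - (Q n) ^ 2) / τ = -ν * vgnsq Ω (Uh (n+1)))
      ∧ -ν * vgnsq Ω (Uh (n+1)) ≤ 0
      ∧ Ke Ω τ (U (n+1)) (P (n+1)) + θ * ((Q (n+1)) ^ 2 - 1)
          ≤ Ke Ω τ (U n) (P n) + θ * ((Q n) ^ 2 - 1) := by
  intro n hn
  obtain ⟨h1, h2, _h3, _h4, _h5, h6⟩ := hscheme n hn
  set u : Euc d → Euc d := U n with hu_def
  set uh : Euc d → Euc d := Uh (n+1) with huh_def
  set p : Euc d → ℝ := P n with hp_def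
  set q : ℝ := Q (n+1) with hq_def
  have hu := hsU n
  have huh := hsUh (n+1)
  have hp := hsP n
  -- continuity of all scalar integrands
  have contA : Continuous fun x => ⟪(1/τ) • (uh x - u x), uh x⟫ :=
    by have h1 := huh.continuous; have h2 := hu.continuous; fun_prop
  have contB : Continuous fun x => ⟪conv u u x, uh x⟫ := by
    refine Continuous.inner ?_ huh.continuous
    exact continuous_toEuc (continuous_pi fun i => continuous_finset_sum _ fun j _ =>
      (continuous_coord hu.continuous j).mul (contDiff_pder (contDiff_coord hu i) j).continuous)
  have contC : Continuous fun x => ⟪grd p x, uh x⟫ := by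
    refine Continuous.inner ?_ huh.continuous
    exact continuous_toEuc (continuous_pi fun j => (contDiff_pder hp j).continuous)
  have contD : Continuous fun x => ⟪vlap uh x, uh x⟫ := by
    refine Continuous.inner ?_ huh.continuous
    exact continuous_toEuc (continuous_pi fun i => continuous_finset_sum _ fun j _ =>
      (contDiff_pder (contDiff_pder (contDiff_coord huh i) j) j).continuous)
  have contG : Continuous fun x => ∑ i, ‖grd (fun y => uh y i) x‖^2 := by
    refine continuous_finset_sum _ fun i _ => ?_
    exact ((continuous_toEuc (continuous_pi fun j =>
      (contDiff_pder (contDiff_coord huh i) j).continuous)).norm).pow 2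
  have hintA := integrableOn_of_continuous hΩb contA
  have hintB := integrableOn_of_continuous hΩb contB
  have hintC := integrableOn_of_continuous hΩb contC
  have hintD := integrableOn_of_continuous hΩb contD
  have hintG := integrableOn_of_continuous hΩb contG
  -- the pointwise consequence of the momentum equation (f = 0)
  have hpt : ∀ x ∈ Ω, ⟪(1/τ) • (uh x - u x), uh x⟫ +
      (q * ⟪conv u u x, uh x⟫ + ⟪grd p x, uh x⟫) = ν * ⟪vlap uh x, uh x⟫ := by
    intro x hx
    have h0 : (1/τ) • (uh x - u x) + q • conv u u x + grd p x - ν • vlap uh x = 0 := by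
      simpa using h1 x hx
    have h0' := congrArg (fun w : Euc d => (inner ℝ w (uh x) : ℝ)) h0
    simp only [inner_add_left, inner_sub_left, real_inner_smul_left, inner_zero_left] at h0'
    simp only [real_inner_smul_left, inner_sub_left]
    linarith
  -- the vector field for the divergence theorem
  set W : Euc d → Euc d := fun x => (WithLp.equiv 2 (Fin d → ℝ)).symm
    (fun j => ∑ i, uh x i * pder j (fun y => uh y i) x) with hW_def
  have hWcomp : ∀ jj : Fin d, (fun y => W y jj)
      = fun y => ∑ i, uh y i * pder jj (fun z => uh z i) y := by
    intro jj; funext y; simp [hW_def, WithLp.equiv_symm_apply]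
  have hWj : ∀ jj : Fin d, ContDiff ℝ (⊤ : ℕ∞) (fun y => W y jj) := by
    intro jj
    rw [hWcomp jj]
    exact ContDiff.sum fun i _ =>
      (contDiff_coord huh i).mul (contDiff_pder (contDiff_coord huh i) jj)
  have hW0 : ∀ x ∈ frontier Ω, W x = 0 := by
    intro x hx
    have hcoord : ∀ i, uh x i = 0 := by
      intro i; rw [h2 x hx]; rfl
    have : ∀ jj, W x jj = 0 := by
      intro jj
      rw [show W x jj = ∑ i, uh x i * pder jj (fun z => uh z i) x from
        congrFun (hWcomp jj) x]
      simp [hcoord]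
    ext jj
    simpa using this jj
  have hdiv0 : ∫ x in Ω, divg W x = 0 := by
    unfold divg
    rw [integral_finset_sum _ (fun jj _ =>
      integrableOn_of_continuous hΩb (contDiff_pder (hWj jj) jj).continuous)]
    refine Finset.sum_eq_zero fun jj _ => ?_
    refine integral_pder_eq_zero hΩo hΩb (hWj jj) (fun x hx => ?_) jj
    show W x jj = 0
    rw [hW0 x hx]; rfl
  -- pointwise divergence identity
  have hptD : ∀ x : Euc d, ⟪vlap uh x, uh x⟫ + (∑ i, ‖grd (fun y => uh y i) x‖^2)
      = divg W x := by
    intro x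
    have hdiffc : ∀ (i : Fin d), DifferentiableAt ℝ (fun y => uh y i) x := fun i =>
      ((contDiff_coord huh i).differentiable (by simp)).differentiableAt
    have hdiffp : ∀ (i jj : Fin d), DifferentiableAt ℝ (pder jj (fun y => uh y i)) x :=
      fun i jj => ((contDiff_pder (contDiff_coord huh i) jj).differentiable (by simp)).differentiableAt
    have hdivW : divg W x = ∑ jj, ∑ i,
        (uh x i * pder jj (pder jj (fun y => uh y i)) x
          + pder jj (fun y => uh y i) x * pder jj (fun y => uh y i) x) := by
      unfold divg
      refine Finset.sum_congr rfl fun jj _ => ?_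
      rw [hWcomp jj, pder_finset_sum jj _ _ x (fun i _ => (hdiffc i).fun_mul (hdiffp i jj))]
      refine Finset.sum_congr rfl fun i _ => ?_
      rw [pder_mul jj (hdiffc i) (hdiffp i jj)]
    have hinner : ⟪vlap uh x, uh x⟫
        = ∑ i, (∑ jj, pder jj (pder jj (fun z => uh z i)) x) * uh x i := by
      simp [vlap, lap, PiLp.inner_apply, RCLike.inner_apply, WithLp.equiv_symm_apply]
      exact Finset.sum_congr rfl fun i _ => mul_comm _ _
    have hnorm : ∀ i : Fin d, ‖grd (fun y => uh y i) x‖^2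
        = ∑ jj, pder jj (fun y => uh y i) x * pder jj (fun y => uh y i) x := by
      intro i
      rw [← real_inner_self_eq_norm_sq]
      simp only [grd, WithLp.equiv_symm_apply, PiLp.inner_apply, PiLp.toLp_apply, RCLike.inner_apply, conj_trivial]
    rw [hdivW, Finset.sum_comm, hinner]
    simp only [hnorm]
    rw [← Finset.sum_add_distrib]
    refine Finset.sum_congr rfl fun i _ => ?_
    rw [Finset.sum_add_distrib, Finset.sum_mul]
    congr 1
    exact Finset.sum_congr rfl fun jj _ => mul_comm _ _
  -- the integral identity  ∫⟪Δuh, uh⟫ = -‖∇uh‖²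
  have hIadd : (∫ x in Ω, ⟪vlap uh x, uh x⟫) + vgnsq Ω uh = 0 := by
    have e : (∫ x in Ω, ⟪vlap uh x, uh x⟫) + vgnsq Ω uh
        = ∫ x in Ω, (⟪vlap uh x, uh x⟫ + ∑ i, ‖grd (fun y => uh y i) x‖^2) := by
      rw [vgnsq, ← integral_add hintD hintG]
    rw [e]
    rw [show (fun x => ⟪vlap uh x, uh x⟫ + ∑ i, ‖grd (fun y => uh y i) x‖^2)
      = fun x => divg W x from funext hptD]
    exact hdiv0
  -- the exact energy law
  have law : (Ke Ω τ (U (n+1)) (P (n+1)) - Ke Ω τ u p) / τ + θ * (q ^ 2 - (Q n) ^ 2) / τ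
      = -ν * vgnsq Ω uh := by
    rw [h6]
    have e1 : ipL2 Ω (fun x => (1/τ) • (uh x - u x)) uh + q * triB Ω u u uh + ipGrad Ω p uh
        = ∫ x in Ω, (⟪(1/τ) • (uh x - u x), uh x⟫
            + (q * ⟪conv u u x, uh x⟫ + ⟪grd p x, uh x⟫)) := by
      simp only [ipL2, triB, ipGrad]
      have hq : q * (∫ x in Ω, ⟪conv u u x, uh x⟫) = ∫ x in Ω, q * ⟪conv u u x, uh x⟫ := by
        simpa [smul_eq_mul] using
          (integral_smul (μ := volume.restrict Ω) q (fun x => ⟪conv u u x, uh x⟫)).symm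
      have eBC : (∫ x in Ω, (q * ⟪conv u u x, uh x⟫ + ⟪grd p x, uh x⟫))
          = (∫ x in Ω, q * ⟪conv u u x, uh x⟫) + ∫ x in Ω, ⟪grd p x, uh x⟫ :=
        integral_add (hintB.const_mul q) hintC
      have eABC : (∫ x in Ω, (⟪(1/τ) • (uh x - u x), uh x⟫
            + (q * ⟪conv u u x, uh x⟫ + ⟪grd p x, uh x⟫)))
          = (∫ x in Ω, ⟪(1/τ) • (uh x - u x), uh x⟫)
            + ∫ x in Ω, (q * ⟪conv u u x, uh x⟫ + ⟪grd p x, uh x⟫) :=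
        integral_add hintA ((hintB.const_mul q).add hintC)
      rw [hq, eABC, eBC]
      ring
    have e2 : ∫ x in Ω, (⟪(1/τ) • (uh x - u x), uh x⟫
          + (q * ⟪conv u u x, uh x⟫ + ⟪grd p x, uh x⟫))
        = ∫ x in Ω, ν * ⟪vlap uh x, uh x⟫ :=
      setIntegral_congr_fun hΩo.measurableSet (fun x hx => hpt x hx)
    have e3 : ∫ x in Ω, ν * ⟪vlap uh x, uh x⟫ = ν * ∫ x in Ω, ⟪vlap uh x, uh x⟫ := by
      simpa [smul_eq_mul] using
        integral_smul (μ := volume.restrict Ω) ν (fun x => ⟪vlap uh x, uh x⟫)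
    rw [e1, e2, e3]
    have e4 : ∫ x in Ω, ⟪vlap uh x, uh x⟫ = - vgnsq Ω uh := by linarith
    rw [e4]; ring
  -- nonnegativity of the gradient norm
  have hg0 : 0 ≤ vgnsq Ω uh :=
    integral_nonneg fun x => Finset.sum_nonneg fun i _ => pow_two_nonneg _
  have hnonpos : -ν * vgnsq Ω uh ≤ 0 := by nlinarith [hν.1, hg0]
  refine ⟨law, hnonpos, ?_⟩
  -- unconditional stability
  have hτne : τ ≠ 0 := ne_of_gt hτpos
  have hmul := congrArg (fun z => z * τ) law
  rw [add_mul, div_mul_cancel₀ _ hτne, div_mul_cancel₀ _ hτne] at hmul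
  have hle : -ν * vgnsq Ω uh * τ ≤ 0 := by
    have h1' : 0 ≤ τ * (ν * vgnsq Ω uh) := mul_nonneg hτpos.le (mul_nonneg hν.1.le hg0)
    nlinarith
  nlinarith [hmul, hle]
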